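/- Let G be a group with right Følner sequence (F_k) acting by *-automorphisms Ξ on a unital C*-algebra M, let x ∈ M be positive, and let (σ_k) be states on M with σ_k((1/|F_k|) ∑_{g∈F_k} Ξ_g x) = ‖(1/|F_k|) ∑_{g∈F_k} Ξ_g x‖ for each k. Fix an infinite hypernatural K and define ω(y) = st(*(k ↦ σ_k((1/|F_k|) ∑_{g∈F_k} Ξ_g y))(K)). Then ω is a Ξ-invariant state on M, i.e., ω ∘ Ξ_{g₀} = ω for all g₀ ∈ G. -/

import Mathlib

open Filter

/-- A state on a unital C*-algebra: a linear, unital, positive functional. -/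
def IsState {A : Type*} [NormedRing A] [StarRing A] [NormedAlgebra ℂ A]
    (φ : A → ℂ) : Prop :=
  (∀ x y : A, φ (x + y) = φ x + φ y) ∧
  (∀ (c : ℂ) (x : A), φ (c • x) = c * φ x) ∧
  φ 1 = 1 ∧
  ∀ a : A, 0 ≤ (φ (star a * a)).re ∧ (φ (star a * a)).im = 0

/-- The hypernatural numbers. -/
def Hypernat : Type := Germ (hyperfilter ℕ : Filter ℕ) ℕ

/-- A hypernatural is unlimited if it is not a standard natural number. -/
def Hypernat.Unlimited (K : Hypernat) : Prop :=
  ∀ n : ℕ, K ≠ (Filter.Germ.const n : Germ (hyperfilter ℕ : Filter ℕ) ℕ)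

/-- The value `*f(K)` of the nonstandard extension of `f : ℕ → α` at `K`. -/
noncomputable def Hypernat.extEval {α : Type*} (f : ℕ → α) (K : Hypernat) :
    Germ (hyperfilter ℕ : Filter ℕ) α :=
  Filter.Germ.map f K

/-- `st(z) = L` for a hypercomplex number `z`. -/
def IsStC (z : Germ (hyperfilter ℕ : Filter ℕ) ℂ) (L : ℂ) : Prop :=
  Hyperreal.IsSt (z.map Complex.re) L.re ∧ Hyperreal.IsSt (z.map Complex.im) L.im

/-! Each `y ↦ σ_k (|F_k|⁻¹ • ∑_{g ∈ F_k} Ξ_g y)` is a state, and since `K` is unlimited, taking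
the standard part at `*K` is a limit along an ultrafilter finer than `atTop`; pointwise limits of
states are states. For invariance, the averages of `Ξ_{g₀} y` and of `y` differ by a sum over
`F_k g₀ ∆ F_k` of isometric images of `y`, so their difference has norm at most
`|F_k ∆ F_k g₀| / |F_k| · ‖y‖ → 0`, and states are contractive by Cauchy–Schwarz for the GNS
form. -/

open Finset Topology
open scoped ComplexOrder InnerProductSpace

namespace IsState

section

variable {A : Type*} [NormedRing A] [StarRing A] [NormedAlgebra ℂ A] {φ : A → ℂ}

def toLinearMap (h : IsState φ) : A →ₗ[ℂ] ℂ where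
  toFun := φ
  map_add' := h.1
  map_smul' := h.2.1

@[simp]
lemma coe_toLinearMap (h : IsState φ) : ⇑h.toLinearMap = φ := rfl

lemma nonneg_star_mul_self (h : IsState φ) (a : A) : 0 ≤ φ (star a * a) :=
  Complex.nonneg_iff.2 ⟨(h.2.2.2 a).1, (h.2.2.2 a).2.symm⟩

lemma of_nonneg (hadd : ∀ x y : A, φ (x + y) = φ x + φ y)
    (hsmul : ∀ (c : ℂ) (x : A), φ (c • x) = c * φ x) (hone : φ 1 = 1)
    (hpos : ∀ a : A, 0 ≤ φ (star a * a)) : IsState φ :=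
  ⟨hadd, hsmul, hone, fun a => (Complex.nonneg_iff.1 (hpos a)).imp_right Eq.symm⟩

lemma of_tendsto {ι : Type*} {l : Filter ι} [l.NeBot] {φ : ι → A → ℂ} {ψ : A → ℂ}
    (hφ : ∀ i, IsState (φ i)) (hψ : ∀ a, Tendsto (fun i => φ i a) l (𝓝 (ψ a))) :
    IsState ψ := by
  refine of_nonneg (fun x y => ?_) (fun c x => ?_) ?_ fun a => ?_
  · refine tendsto_nhds_unique (hψ (x + y)) ?_
    simpa only [(hφ _).1] using (hψ x).add (hψ y)
  · refine tendsto_nhds_unique (hψ (c • x)) ?_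
    simpa only [(hφ _).2.1] using (hψ x).const_mul c
  · refine tendsto_nhds_unique (hψ 1) ?_
    simpa only [(hφ _).2.2.1] using tendsto_const_nhds
  · exact ge_of_tendsto' (hψ _) fun i => (hφ i).nonneg_star_mul_self a

lemma comp {B F : Type*} [NormedRing B] [StarRing B] [NormedAlgebra ℂ B] [FunLike F B A]
    [AlgHomClass F ℂ B A] [StarHomClass F B A] (h : IsState φ) (Ψ : F) : IsState (φ ∘ Ψ) :=
  of_nonneg (fun x y => by simp only [Function.comp_apply, map_add, h.1])
    (fun c x => by simp only [Function.comp_apply, map_smul, h.2.1])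
    (by simp only [Function.comp_apply, map_one, h.2.2.1])
    fun a => by
      simpa only [Function.comp_apply, map_mul, map_star] using h.nonneg_star_mul_self (Ψ a)

lemma finset_average {ι : Type*} {s : Finset ι} (hs : s.Nonempty) {φ : ι → A → ℂ}
    (hφ : ∀ i ∈ s, IsState (φ i)) : IsState fun a => (#s : ℂ)⁻¹ * ∑ i ∈ s, φ i a := by
  refine of_nonneg (fun x y => ?_) (fun c x => ?_) ?_ fun a => ?_
  · rw [← mul_add, ← sum_add_distrib]
    exact congrArg _ (sum_congr rfl fun i hi => (hφ i hi).1 x y)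
  · rw [mul_sum, mul_sum, mul_sum]
    exact sum_congr rfl fun i hi => by rw [(hφ i hi).2.1, mul_left_comm]
  · rw [sum_congr rfl fun i hi => (hφ i hi).2.2.1, sum_const, nsmul_one]
    exact inv_mul_cancel₀ (Nat.cast_ne_zero.2 hs.card_pos.ne')
  · exact mul_nonneg (by positivity) (sum_nonneg fun i hi => (hφ i hi).nonneg_star_mul_self a)

lemma comp_average {G F : Type*} [FunLike F A A] [AlgHomClass F ℂ A A] [StarHomClass F A A]
    (h : IsState φ) (Ξ : G → F) {s : Finset G} (hs : s.Nonempty) :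
    IsState fun y => φ ((#s : ℂ)⁻¹ • ∑ g ∈ s, Ξ g y) := by
  convert finset_average hs fun g _ => h.comp (Ξ g) using 2 with y
  rw [← h.coe_toLinearMap, map_smul, map_sum, smul_eq_mul]
  rfl

end

lemma norm_apply_le {A : Type*} [CStarAlgebra A] {φ : A → ℂ} (h : IsState φ) (a : A) :
    ‖φ a‖ ≤ ‖a‖ := by
  let := CStarAlgebra.spectralOrder A
  have := CStarAlgebra.spectralOrderedRing A
  let f : A →ₚ[ℂ] ℂ := .mk₀ h.toLinearMap fun x hx => by
    obtain ⟨b, rfl⟩ := CStarAlgebra.nonneg_iff_eq_star_mul_self.1 hx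
    exact h.nonneg_star_mul_self b
  have hf : ∀ x, f x = φ x := fun _ => rfl
  have hf1 : ‖f 1‖ = 1 := by rw [hf, h.2.2.1, norm_one]
  have h1 : ‖f.toPreGNS 1‖ = 1 := by
    simp [PositiveLinearMap.preGNS_norm_def, hf, h.2.2.1]
  have ha : ‖f.toPreGNS a‖ ≤ ‖a‖ := by
    refine (pow_le_pow_iff_left₀ (norm_nonneg _) (norm_nonneg _) two_ne_zero).1 ?_
    calc ‖f.toPreGNS a‖ ^ 2 = ‖f (star a * a)‖ := by
          have h := f.preGNS_norm_sq (f.toPreGNS a)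
          rw [f.ofPreGNS_toPreGNS] at h
          rw [← h, norm_pow, Complex.norm_real, norm_norm]
      _ ≤ ‖f 1‖ * ‖star a * a‖ := f.norm_apply_le_of_nonneg _ (star_mul_self_nonneg a)
      _ = ‖a‖ ^ 2 := by rw [hf1, one_mul, CStarRing.norm_star_mul_self, sq]
  -- Cauchy–Schwarz for the GNS semi-inner product `⟪a, b⟫ = φ (star a * b)`.
  calc ‖φ a‖ = ‖⟪f.toPreGNS 1, f.toPreGNS a⟫_ℂ‖ := by
        simp [PositiveLinearMap.preGNS_inner_def, hf]
    _ ≤ ‖f.toPreGNS 1‖ * ‖f.toPreGNS a‖ := norm_inner_le_norm _ _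
    _ ≤ ‖a‖ := by rw [h1, one_mul]; exact ha

end IsState

lemma Hypernat.tendsto_atTop_of_unlimited {u : ℕ → ℕ}
    (hu : Hypernat.Unlimited (u : Germ (hyperfilter ℕ : Filter ℕ) ℕ)) :
    Tendsto u (hyperfilter ℕ) atTop := by
  rw [← Nat.cofinite_eq_atTop]
  refine (Ultrafilter.map u (hyperfilter ℕ)).le_cofinite_or_eq_pure.resolve_right ?_
  rintro ⟨n, hn⟩
  exact hu n (Germ.coe_eq.2 (show {n} ∈ Ultrafilter.map u (hyperfilter ℕ) from hn ▸ rfl))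

lemma tendsto_of_isStC_coe {f : ℕ → ℂ} {L : ℂ}
    (h : IsStC (f : Germ (hyperfilter ℕ : Filter ℕ) ℂ) L) :
    Tendsto f (hyperfilter ℕ) (𝓝 L) := by
  have hre := Hyperreal.isSt_ofSeq_iff_tendsto.1 h.1
  have him := Hyperreal.isSt_ofSeq_iff_tendsto.1 h.2
  simpa only [Function.comp_def, Complex.re_add_im] using
    ((Complex.continuous_ofReal.tendsto _).comp hre).add
      (((Complex.continuous_ofReal.tendsto _).comp him).mul_const Complex.I)

lemma Hypernat.tendsto_of_isStC_extEval {f : ℕ → ℂ} {u : ℕ → ℕ} {L : ℂ}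
    (h : IsStC (Hypernat.extEval f (u : Germ (hyperfilter ℕ : Filter ℕ) ℕ)) L) :
    Tendsto f (map u (hyperfilter ℕ)) (𝓝 L) :=
  tendsto_map'_iff.2 (tendsto_of_isStC_coe h)

lemma norm_sum_sub_sum_le_card_symmDiff_mul {ι E : Type*} [DecidableEq ι]
    [SeminormedAddCommGroup E] (s t : Finset ι) {f : ι → E} {C : ℝ} (hf : ∀ i, ‖f i‖ ≤ C) :
    ‖∑ i ∈ s, f i - ∑ i ∈ t, f i‖ ≤ #(symmDiff s t) * C := by
  rw [← sum_sdiff_sub_sum_sdiff, symmDiff_def, sup_eq_union,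
    card_union_of_disjoint disjoint_sdiff_sdiff, Nat.cast_add, add_mul]
  refine (norm_sub_le _ _).trans (add_le_add ?_ ?_) <;>
  · refine (norm_sum_le_of_le _ fun i _ => hf i).trans ?_
    rw [sum_const, nsmul_eq_mul]

lemma norm_average_mul_right_sub_le {G E : Type*} [Group G] [DecidableEq G]
    [SeminormedAddCommGroup E] [NormedSpace ℂ E] (T : G → E → E)
    (hT : ∀ g h y, T (g * h) y = T g (T h y)) (hT_norm : ∀ g y, ‖T g y‖ ≤ ‖y‖)
    (s : Finset G) (g₀ : G) (y : E) :
    ‖(#s : ℂ)⁻¹ • ∑ g ∈ s, T g (T g₀ y) - (#s : ℂ)⁻¹ • ∑ g ∈ s, T g y‖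
      ≤ #(symmDiff s (s.image (· * g₀))) / #s * ‖y‖ := by
  have hshift : ∑ g ∈ s, T g (T g₀ y) = ∑ h ∈ s.image (· * g₀), T h y := by
    rw [sum_image fun a _ b _ => mul_right_cancel]
    exact sum_congr rfl fun g _ => (hT g g₀ y).symm
  rw [← smul_sub, norm_smul, norm_inv, Complex.norm_natCast, hshift, symmDiff_comm,
    div_eq_inv_mul, mul_assoc]
  gcongr
  exact norm_sum_sub_sum_le_card_symmDiff_mul _ _ fun g => hT_norm g y

lemma tendsto_state_average_mul_right_sub {G A : Type*} [Group G] [DecidableEq G]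
    [CStarAlgebra A] (F : ℕ → Finset G)
    (hFolner : ∀ g : G,
      Tendsto (fun k => (#(symmDiff (F k) ((F k).image (· * g))) : ℝ) / #(F k)) atTop (𝓝 0))
    (Ξ : G → A ≃⋆ₐ[ℂ] A) (hΞ : ∀ g h : G, ∀ y : A, Ξ (g * h) y = Ξ g (Ξ h y))
    (σ : ℕ → A → ℂ) (hσ : ∀ k, IsState (σ k)) (g₀ : G) (y : A) :
    Tendsto (fun k => σ k ((#(F k) : ℂ)⁻¹ • ∑ g ∈ F k, Ξ g (Ξ g₀ y))
      - σ k ((#(F k) : ℂ)⁻¹ • ∑ g ∈ F k, Ξ g y)) atTop (𝓝 0) := by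
  refine squeeze_zero_norm (fun k => ?_)
    (by simpa only [zero_mul] using (hFolner g₀).mul_const ‖y‖)
  rw [← (hσ k).coe_toLinearMap, ← map_sub, (hσ k).coe_toLinearMap]
  exact ((hσ k).norm_apply_le _).trans <|
    norm_average_mul_right_sub_le (fun g => Ξ g) hΞ (fun g y => (StarAlgEquiv.norm_map _ y).le)
      _ g₀ y

theorem invariant_state_from_ultralimit_general
    {G : Type*} [Group G] [DecidableEq G] {M : Type*}
    [NormedRing M] [StarRing M] [CStarRing M] [NormedAlgebra ℂ M] [StarModule ℂ M]
    [CompleteSpace M]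
    (F : ℕ → Finset G) (hne : ∀ k, (F k).Nonempty)
    (hFolner : ∀ g : G,
      Tendsto (fun k => ((symmDiff (F k) ((F k).image (· * g))).card : ℝ) / (F k).card)
        atTop (nhds 0))
    (Ξ : G → M ≃⋆ₐ[ℂ] M) (hΞ : ∀ g h : G, ∀ y : M, Ξ (g * h) y = Ξ g (Ξ h y))
    (σ : ℕ → M → ℂ) (hσ : ∀ k, IsState (σ k))
    (K : Hypernat) (hK : K.Unlimited)
    (ω : M → ℂ)
    (hω : ∀ y : M,
      IsStC (Hypernat.extEval
        (fun k => σ k (((F k).card : ℂ)⁻¹ • ∑ g ∈ F k, Ξ g y)) K) (ω y)) :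
    IsState ω ∧ ∀ (g₀ : G) (y : M), ω (Ξ g₀ y) = ω y := by
  obtain ⟨u, rfl⟩ := Quot.exists_rep K
  have hlim y := Hypernat.tendsto_of_isStC_extEval (hω y)
  refine ⟨IsState.of_tendsto (fun k => (hσ k).comp_average Ξ (hne k)) hlim, fun g₀ y => ?_⟩
  let : CStarAlgebra M := {}
  refine sub_eq_zero.1 (tendsto_nhds_unique ((hlim _).sub (hlim y)) ?_)
  exact (tendsto_state_average_mul_right_sub F hFolner Ξ hΞ σ hσ g₀ y).mono_left
    (Hypernat.tendsto_atTop_of_unlimited hK)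

/-- The ultralimit along an unlimited hypernatural of norming states of the
Følner averages of a positive element is an invariant state. -/
theorem invariant_state_from_ultralimit
    {G : Type*} [Group G] [DecidableEq G] {M : Type*}
    [NormedRing M] [StarRing M] [CStarRing M] [NormedAlgebra ℂ M] [StarModule ℂ M]
    [CompleteSpace M]
    (F : ℕ → Finset G) (hne : ∀ k, (F k).Nonempty)
    (hFolner : ∀ g : G,
      Tendsto (fun k => ((symmDiff (F k) ((F k).image (· * g))).card : ℝ) / (F k).card)
        atTop (nhds 0))
    (Ξ : G → M ≃⋆ₐ[ℂ] M) (hΞ : ∀ g h : G, ∀ y : M, Ξ (g * h) y = Ξ g (Ξ h y))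
    (x : M) (hx : ∃ b : M, x = star b * b)
    (σ : ℕ → M → ℂ) (hσ : ∀ k, IsState (σ k))
    (hnorming : ∀ k,
      σ k (((F k).card : ℂ)⁻¹ • ∑ g ∈ F k, Ξ g x)
        = (‖((F k).card : ℂ)⁻¹ • ∑ g ∈ F k, Ξ g x‖ : ℂ))
    (K : Hypernat) (hK : K.Unlimited)
    (ω : M → ℂ)
    (hω : ∀ y : M,
      IsStC (Hypernat.extEval
        (fun k => σ k (((F k).card : ℂ)⁻¹ • ∑ g ∈ F k, Ξ g y)) K) (ω y)) :
    IsState ω ∧ ∀ (g₀ : G) (y : M), ω (Ξ g₀ y) = ω y :=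
  invariant_state_from_ultralimit_general F hne hFolner Ξ hΞ σ hσ K hK ω hω
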